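/- arXiv:2009.10709 — 5 statements merged into one kernel-verified Lean document; each statement's English description precedes it below -/
import Mathlib

section
/- If α = (α_0,...,α_{N-1}) is a vector of nonnegative reals with ℓ2-norm 1, and A = (A_0,...,A_{N-1}) is obtained by rounding each α_i down to g bits of precision (so A_i ≤ α_i and α_i - A_i < 2^{-g}), then the inner product ⟨α, A⟩ / ‖A‖₂ ≥ ‖A‖₂ ≥ √(1 - 2·2^{-g}·‖α‖₁). -/
open Finset Real

/-!
Rounding down gives `0 ≤ Aᵢ ≤ αᵢ`, so `‖A‖₂² ≤ ⟨α, A⟩`, which is the first inequality after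
dividing by `‖A‖₂`. For the second, `αᵢ² - Aᵢ² = (αᵢ - Aᵢ)(αᵢ + Aᵢ) ≤ 2^{-g} · 2αᵢ`; summing over `i`
and using `‖α‖₂ = 1` gives `1 - 2 · 2^{-g} ‖α‖₁ ≤ ‖A‖₂²`.
-/

section FloorRounding

variable {K : Type*} [Field K] [LinearOrder K] [IsStrictOrderedRing K] [FloorRing K]
  {q x : K}

theorem floor_mul_div_nonneg (hq : 0 < q) (hx : 0 ≤ x) : 0 ≤ (⌊q * x⌋ : K) / q :=
  div_nonneg (mod_cast Int.floor_nonneg.2 (mul_nonneg hq.le hx)) hq.le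

theorem floor_mul_div_le (hq : 0 < q) : (⌊q * x⌋ : K) / q ≤ x := by
  rw [div_le_iff₀ hq, mul_comm x]
  exact Int.floor_le _

theorem sub_floor_mul_div_lt (hq : 0 < q) : x - (⌊q * x⌋ : K) / q < q⁻¹ := by
  rw [sub_lt_iff_lt_add', ← one_div, ← add_div, lt_div_iff₀ hq, mul_comm x]
  exact Int.lt_floor_add_one (q * x)

end FloorRounding

theorem sq_sub_two_mul_le_sq {R : Type*} [CommRing R] [LinearOrder R] [IsStrictOrderedRing R]
    {a x ε : R} (ha : 0 ≤ a) (hax : a ≤ x) (hε : x - a ≤ ε) : x ^ 2 - 2 * ε * x ≤ a ^ 2 := by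
  nlinarith

-- For `S ≤ 0` both sides are `0`, since `√S = 0` and `T / 0 = 0`.
theorem sqrt_le_div_sqrt_of_le {S T : ℝ} (hST : S ≤ T) : √S ≤ T / √S := by
  calc √S = S / √S := Real.div_sqrt.symm
    _ ≤ T / √S := div_le_div_of_nonneg_right hST (sqrt_nonneg S)

section RoundedVectors

variable {ι : Type*} [Fintype ι] {x a : ι → ℝ}

theorem sum_sq_le_sum_mul_of_le (ha : ∀ i, 0 ≤ a i) (hax : ∀ i, a i ≤ x i) :
    ∑ i, a i ^ 2 ≤ ∑ i, x i * a i :=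
  sum_le_sum fun i _ => by
    rw [sq]
    exact mul_le_mul_of_nonneg_right (hax i) (ha i)

theorem one_sub_two_mul_sum_le_sum_sq {ε : ℝ} (hx : ∑ i, x i ^ 2 = 1) (ha : ∀ i, 0 ≤ a i)
    (hax : ∀ i, a i ≤ x i) (hε : ∀ i, x i - a i ≤ ε) :
    1 - 2 * ε * ∑ i, x i ≤ ∑ i, a i ^ 2 := by
  rw [← hx, mul_sum, ← sum_sub_distrib]
  exact sum_le_sum fun i _ => sq_sub_two_mul_le_sq (ha i) (hax i) (hε i)

end RoundedVectors

theorem stmt_0_general (N g : ℕ)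
    (α A : Fin N → ℝ)
    (hα_nonneg : ∀ i, 0 ≤ α i)
    (hα_norm : ∑ i, (α i) ^ 2 = 1)
    (hA : ∀ i, A i = ⌊(2 : ℝ) ^ g * α i⌋ / 2 ^ g) :
    (∑ i, α i * A i) / Real.sqrt (∑ i, (A i) ^ 2) ≥ Real.sqrt (∑ i, (A i) ^ 2) ∧
    Real.sqrt (∑ i, (A i) ^ 2) ≥ Real.sqrt (1 - 2 * ((2 : ℝ) ^ g)⁻¹ * ∑ i, α i) := by
  have hpow : (0 : ℝ) < 2 ^ g := by positivity
  have hA_nonneg : ∀ i, 0 ≤ A i := fun i => hA i ▸ floor_mul_div_nonneg hpow (hα_nonneg i)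
  have hA_le : ∀ i, A i ≤ α i := fun i => hA i ▸ floor_mul_div_le hpow
  have hA_err : ∀ i, α i - A i ≤ ((2 : ℝ) ^ g)⁻¹ := fun i =>
    (hA i ▸ sub_floor_mul_div_lt hpow).le
  exact ⟨sqrt_le_div_sqrt_of_le (sum_sq_le_sum_mul_of_le hA_nonneg hA_le),
    sqrt_le_sqrt (one_sub_two_mul_sum_le_sum_sq hα_norm hA_nonneg hA_le hA_err)⟩

/-- g-bit rounding towards zero: ⟨α, A⟩ / ‖A‖₂ ≥ ‖A‖₂ ≥ √(1 - 2·2^{-g}·‖α‖₁). -/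
theorem stmt_0 (N g : ℕ) (hN : 0 < N) (hg : 0 < g)
    (α A : Fin N → ℝ)
    (hα_nonneg : ∀ i, 0 ≤ α i)
    (hα_norm : ∑ i, (α i) ^ 2 = 1)
    (hA : ∀ i, A i = ⌊(2 : ℝ) ^ g * α i⌋ / 2 ^ g)
    (hA_pos : 0 < Real.sqrt (∑ i, (A i) ^ 2)) :
    (∑ i, α i * A i) / Real.sqrt (∑ i, (A i) ^ 2) ≥ Real.sqrt (∑ i, (A i) ^ 2) ∧
    Real.sqrt (∑ i, (A i) ^ 2) ≥ Real.sqrt (1 - 2 * ((2 : ℝ) ^ g)⁻¹ * ∑ i, α i) :=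
  stmt_0_general N g α A hα_nonneg hα_norm hA
end

section
/- The overlap between the intermediate target state |ω⟩ and the initial state |s⟩ equals ⟨ω|s⟩ = √(‖A‖₁/N) · 2^{g/2}/√(2^g−1), where A_i = ∑_{j=0}^{g-1} 2^{-(j+1)} A_{ij} for bits A_{ij} ∈ {0,1}. -/
open Finset Real

/-
The amplitude weights of |ω⟩ and |s⟩ multiply to 2^{-(j+1)/2} · 2^{(g-j-1)/2} = 2^{g/2} · 2^{-(j+1)},
so the overlap is 2^{g/2} ‖A‖₁ divided by the normalisations √‖A‖₁, √N and √(2^g - 1),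
and ‖A‖₁ / √‖A‖₁ = √‖A‖₁.
-/

lemma rpow_neg_half_mul_rpow_half {x : ℝ} (hx : 0 < x) (j : ℕ) (t : ℝ) :
    x ^ (-((j : ℝ) + 1) / 2) * x ^ ((t - j - 1) / 2) = x ^ (t / 2) * (x ^ (j + 1))⁻¹ := by
  rw [← rpow_natCast x (j + 1), ← rpow_neg hx.le, ← rpow_add hx, ← rpow_add hx]
  congr 1
  push_cast
  ring

theorem stmt_3_general (N g : ℕ)
    (A : Fin N → Fin g → ℝ)
    (Amp : Fin N → ℝ)
    (hAmp : ∀ i, Amp i = ∑ j : Fin g, ((2 : ℝ) ^ (j.1 + 1))⁻¹ * A i j) :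
    ∑ i : Fin N, ∑ j : Fin g,
        ((2 : ℝ) ^ (-((j.1 : ℝ) + 1) / 2) * A i j / Real.sqrt (∑ i', Amp i')) *
          ((2 : ℝ) ^ (((g : ℝ) - (j.1 : ℝ) - 1) / 2) /
            (Real.sqrt N * Real.sqrt ((2 : ℝ) ^ g - 1))) =
      Real.sqrt ((∑ i, Amp i) / N) * (2 : ℝ) ^ ((g : ℝ) / 2) / Real.sqrt ((2 : ℝ) ^ g - 1) := by
  set L := ∑ i, Amp i with hL
  set D := √L * (√N * √((2 : ℝ) ^ g - 1)) with hD
  calc _ = ∑ i : Fin N, ∑ j : Fin g,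
          (2 : ℝ) ^ ((g : ℝ) / 2) / D * (((2 : ℝ) ^ (j.1 + 1))⁻¹ * A i j) := by
        refine sum_congr rfl fun i _ => sum_congr rfl fun j _ => ?_
        rw [hD]
        linear_combination A i j / D * rpow_neg_half_mul_rpow_half two_pos j.1 g
    _ = (2 : ℝ) ^ ((g : ℝ) / 2) / D * L := by simp only [← mul_sum, hL, hAmp]
    _ = L / √L / √N * (2 : ℝ) ^ ((g : ℝ) / 2) / √((2 : ℝ) ^ g - 1) := by ring
    _ = _ := by rw [div_sqrt, sqrt_div' L (Nat.cast_nonneg N)]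

/-- the overlap ⟨ω|s⟩ between the intermediate target state and the initial
    state equals √(‖A‖₁/N) · 2^{g/2}/√(2^g−1). -/
theorem stmt_3 (N g : ℕ) (hN : 1 ≤ N) (hg : 1 ≤ g)
    (A : Fin N → Fin g → ℝ)
    (hbits : ∀ i j, A i j = 0 ∨ A i j = 1)
    (Amp : Fin N → ℝ)
    (hAmp : ∀ i, Amp i = ∑ j : Fin g, ((2 : ℝ) ^ (j.1 + 1))⁻¹ * A i j)
    (hL1 : 0 < ∑ i, Amp i) :
    ∑ i : Fin N, ∑ j : Fin g,
        ((2 : ℝ) ^ (-((j.1 : ℝ) + 1) / 2) * A i j / Real.sqrt (∑ i', Amp i')) *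
          ((2 : ℝ) ^ (((g : ℝ) - (j.1 : ℝ) - 1) / 2) /
            (Real.sqrt N * Real.sqrt ((2 : ℝ) ^ g - 1))) =
      Real.sqrt ((∑ i, Amp i) / N) * (2 : ℝ) ^ ((g : ℝ) / 2) / Real.sqrt ((2 : ℝ) ^ g - 1) :=
  stmt_3_general N g A Amp hAmp
end

section
/- With Π = 1 ⊗ |g⟩_G⟨g|_G the projection onto the gradient state in the second register, the second-stage success probability satisfies ⟨ω|Π|ω⟩ = (2^g/(2^g−1)) · (∑_i A_i²)/‖A‖₁ ≥ ‖A‖₂²/‖A‖₁. -/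
open Finset Real

/-- with Π = 1 ⊗ |g⟩_G⟨g|_G, the second-stage success probability is
    ⟨ω|Π|ω⟩ = (2^g/(2^g−1)) · ‖A‖₂²/‖A‖₁ ≥ ‖A‖₂²/‖A‖₁. -/
theorem stmt_6 (N g : ℕ) (hN : 1 ≤ N) (hg : 1 ≤ g)
    (A : Fin N → Fin g → ℝ)
    (hbits : ∀ i j, A i j = 0 ∨ A i j = 1)
    (Amp : Fin N → ℝ)
    (hAmp : ∀ i, Amp i = ∑ j : Fin g, ((2 : ℝ) ^ (j.1 + 1))⁻¹ * A i j)
    (hL1 : 0 < ∑ i, Amp i) :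
    (∑ i : Fin N,
        (∑ j : Fin g,
          ((2 : ℝ) ^ (((g : ℝ) - (j.1 : ℝ) - 1) / 2) / Real.sqrt ((2 : ℝ) ^ g - 1)) *
            ((2 : ℝ) ^ (-((j.1 : ℝ) + 1) / 2) * A i j / Real.sqrt (∑ i', Amp i'))) ^ 2)
      = ((2 : ℝ) ^ g / ((2 : ℝ) ^ g - 1)) * (∑ i, (Amp i) ^ 2) / (∑ i, Amp i) ∧
    ((2 : ℝ) ^ g / ((2 : ℝ) ^ g - 1)) * (∑ i, (Amp i) ^ 2) / (∑ i, Amp i)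
      ≥ (∑ i, (Amp i) ^ 2) / (∑ i, Amp i) := by
  set S : ℝ := ∑ i, Amp i with hS
  have h2g : (2:ℝ) ≤ (2:ℝ) ^ g := by
    calc (2:ℝ) = 2 ^ 1 := by norm_num
    _ ≤ 2 ^ g := by
      apply pow_le_pow_right₀ (by norm_num) hg
  have hpos : (0:ℝ) < (2:ℝ) ^ g - 1 := by linarith
  have hsq1 : Real.sqrt ((2:ℝ)^g - 1) ^ 2 = (2:ℝ)^g - 1 := Real.sq_sqrt hpos.le
  have hsq2 : Real.sqrt S ^ 2 = S := Real.sq_sqrt hL1.le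
  have key : ∀ i : Fin N,
      (∑ j : Fin g,
          ((2 : ℝ) ^ (((g : ℝ) - (j.1 : ℝ) - 1) / 2) / Real.sqrt ((2 : ℝ) ^ g - 1)) *
            ((2 : ℝ) ^ (-((j.1 : ℝ) + 1) / 2) * A i j / Real.sqrt S))
      = (2:ℝ) ^ ((g:ℝ)/2) / (Real.sqrt ((2:ℝ)^g - 1) * Real.sqrt S) * Amp i := by
    intro i
    rw [hAmp i, Finset.mul_sum]
    refine Finset.sum_congr rfl fun j _ => ?_
    have hr : (2 : ℝ) ^ (((g : ℝ) - (j.1 : ℝ) - 1) / 2) * (2 : ℝ) ^ (-((j.1 : ℝ) + 1) / 2)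
        = (2:ℝ) ^ ((g:ℝ)/2) * ((2 : ℝ) ^ (j.1 + 1))⁻¹ := by
      rw [← Real.rpow_natCast 2 (j.1+1), ← Real.rpow_neg (by norm_num),
        ← Real.rpow_add (by norm_num), ← Real.rpow_add (by norm_num)]
      congr 1
      push_cast
      ring
    calc ((2 : ℝ) ^ (((g : ℝ) - (j.1 : ℝ) - 1) / 2) / Real.sqrt ((2 : ℝ) ^ g - 1)) *
            ((2 : ℝ) ^ (-((j.1 : ℝ) + 1) / 2) * A i j / Real.sqrt S)
        = ((2 : ℝ) ^ (((g : ℝ) - (j.1 : ℝ) - 1) / 2) * (2 : ℝ) ^ (-((j.1 : ℝ) + 1) / 2)) * A i j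
            / (Real.sqrt ((2 : ℝ) ^ g - 1) * Real.sqrt S) := by ring
      _ = _ := by rw [hr]; ring
  constructor
  · have hLHS : (∑ i : Fin N,
        (∑ j : Fin g,
          ((2 : ℝ) ^ (((g : ℝ) - (j.1 : ℝ) - 1) / 2) / Real.sqrt ((2 : ℝ) ^ g - 1)) *
            ((2 : ℝ) ^ (-((j.1 : ℝ) + 1) / 2) * A i j / Real.sqrt S)) ^ 2)
        = ∑ i : Fin N, ((2:ℝ)^g / (((2:ℝ)^g - 1) * S)) * (Amp i)^2 := by
      refine Finset.sum_congr rfl fun i _ => ?_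
      rw [key i, mul_pow, div_pow, mul_pow, hsq1, hsq2]
      rw [← Real.rpow_natCast ((2:ℝ) ^ ((g:ℝ)/2)) 2, ← Real.rpow_mul (by norm_num)]
      norm_num [Real.rpow_natCast]
    rw [hLHS, ← Finset.mul_sum]
    field_simp
  · have hnum : (0:ℝ) ≤ ∑ i, (Amp i)^2 := Finset.sum_nonneg fun i _ => sq_nonneg _
    have h1 : (1:ℝ) ≤ (2:ℝ)^g / ((2:ℝ)^g - 1) := by
      rw [le_div_iff₀ hpos]; linarith
    rw [ge_iff_le, div_le_div_iff₀ hL1 hL1]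
    have : (∑ i, (Amp i)^2) * 1 ≤ ((2:ℝ)^g / ((2:ℝ)^g - 1)) * (∑ i, (Amp i)^2) := by
      rw [mul_comm]
      exact mul_le_mul_of_nonneg_right h1 hnum
    nlinarith [hL1]
end

section
/- If each A_i satisfies α_i − 2^{-g} ≤ A_i ≤ α_i with α_i ≥ 0 and ‖α‖₂ = 1, then ‖A‖₂²/‖A‖₁ ≥ 1/‖α‖₁ − 2·2^{-g}. -/
open Finset

/-- for the g-bit rounding A of a nonnegative unit vector α,
    ‖A‖₂²/‖A‖₁ ≥ 1/‖α‖₁ − 2·2^{-g}. -/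
theorem stmt_7 (N g : ℕ) (hN : 1 ≤ N) (hg : 1 ≤ g)
    (α A : Fin N → ℝ)
    (hα_nonneg : ∀ i, 0 ≤ α i)
    (hα_norm : ∑ i, (α i) ^ 2 = 1)
    (hA_nonneg : ∀ i, 0 ≤ A i)
    (hA_le : ∀ i, A i ≤ α i)
    (hA_ge : ∀ i, α i - ((2 : ℝ) ^ g)⁻¹ ≤ A i)
    (hL1 : 0 < ∑ i, A i) :
    (∑ i, (A i) ^ 2) / (∑ i, A i) ≥ (∑ i, α i)⁻¹ - 2 * ((2 : ℝ) ^ g)⁻¹ := by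
  set ε : ℝ := ((2 : ℝ) ^ g)⁻¹ with hε
  have hε_pos : 0 < ε := by positivity
  set S := ∑ i, α i with hS
  set T := ∑ i, A i with hT
  have hST : T ≤ S := Finset.sum_le_sum fun i _ => hA_le i
  have hS_pos : 0 < S := lt_of_lt_of_le hL1 hST
  have hkey : ∀ i : Fin N, (α i) ^ 2 - 2 * ε * α i ≤ (A i) ^ 2 := by
    intro i
    rcases le_or_gt ε (α i) with h | h
    · nlinarith [hA_ge i, hA_nonneg i, hα_nonneg i]
    · nlinarith [hA_nonneg i, hα_nonneg i, sq_nonneg (A i)]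
  have hsum : 1 - 2 * ε * S ≤ ∑ i, (A i) ^ 2 := by
    have h := Finset.sum_le_sum fun i (_ : i ∈ Finset.univ) => hkey i
    rw [Finset.sum_sub_distrib, hα_norm, ← Finset.mul_sum, ← hS] at h
    exact h
  have hA2_nonneg : (0:ℝ) ≤ ∑ i, (A i) ^ 2 :=
    Finset.sum_nonneg fun i _ => sq_nonneg _
  have h1 : S⁻¹ - 2 * ε ≤ (∑ i, (A i) ^ 2) / S := by
    rw [le_div_iff₀ hS_pos]
    have : S⁻¹ * S = 1 := inv_mul_cancel₀ hS_pos.ne'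
    nlinarith
  have h2 : (∑ i, (A i) ^ 2) / S ≤ (∑ i, (A i) ^ 2) / T :=
    div_le_div_of_nonneg_left hA2_nonneg hL1 hST
  exact le_trans h1 h2
end

section
/- With the optimized initial state |s'⟩ built from the average bit weight vector, the first-stage overlap satisfies ⟨ω|s'⟩ = (1/√N)·‖Ā‖₂/√(‖A‖₁), where Ā_j = 2^{-(j+1)/2} ∑_{i=0}^{N-1} A_{ij}. -/
open Finset Real

/-- with the optimized initial state |s'⟩ built from the average bit
    weight vector Ā_j = 2^{-(j+1)/2} ∑_i A_{ij}, the first-stage overlap satisfies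
    ⟨ω|s'⟩ = (1/√N)·‖Ā‖₂/√(‖A‖₁). -/
theorem stmt_11 (N g : ℕ) (hN : 1 ≤ N) (hg : 1 ≤ g)
    (A : Fin N → Fin g → ℝ)
    (hbits : ∀ i j, A i j = 0 ∨ A i j = 1)
    (Abar : Fin g → ℝ)
    (hAbar : ∀ j, Abar j = (2 : ℝ) ^ (-((j.1 : ℝ) + 1) / 2) * ∑ i : Fin N, A i j)
    (hL1 : 0 < ∑ i : Fin N, ∑ j : Fin g, ((2 : ℝ) ^ (j.1 + 1))⁻¹ * A i j)
    (hAbar_pos : 0 < Real.sqrt (∑ j, (Abar j) ^ 2)) :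
    ∑ i : Fin N, ∑ j : Fin g,
        ((2 : ℝ) ^ (-((j.1 : ℝ) + 1) / 2) * A i j /
            Real.sqrt (∑ i' : Fin N, ∑ j' : Fin g, ((2 : ℝ) ^ (j'.1 + 1))⁻¹ * A i' j')) *
          ((Real.sqrt N)⁻¹ * (Abar j / Real.sqrt (∑ j', (Abar j') ^ 2))) =
      (Real.sqrt N)⁻¹ * Real.sqrt (∑ j, (Abar j) ^ 2) /
        Real.sqrt (∑ i : Fin N, ∑ j : Fin g, ((2 : ℝ) ^ (j.1 + 1))⁻¹ * A i j) := by
  set L : ℝ := Real.sqrt (∑ i : Fin N, ∑ j : Fin g, ((2 : ℝ) ^ (j.1 + 1))⁻¹ * A i j) with hL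
  set s : ℝ := ∑ j, (Abar j) ^ 2 with hs
  have hsnn : 0 ≤ s := Finset.sum_nonneg fun j _ => sq_nonneg _
  have hss : Real.sqrt s * Real.sqrt s = s := Real.mul_self_sqrt hsnn
  have key : ∑ i : Fin N, ∑ j : Fin g,
      ((2 : ℝ) ^ (-((j.1 : ℝ) + 1) / 2) * A i j / L) *
        ((Real.sqrt N)⁻¹ * (Abar j / Real.sqrt s)) =
      (∑ j : Fin g, Abar j ^ 2) * ((Real.sqrt N)⁻¹ * (Real.sqrt s)⁻¹ * L⁻¹) := by
    rw [Finset.sum_comm, Finset.sum_mul]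
    refine Finset.sum_congr rfl fun j _ => ?_
    have : ∑ i : Fin N, ((2 : ℝ) ^ (-((j.1 : ℝ) + 1) / 2) * A i j / L) *
        ((Real.sqrt N)⁻¹ * (Abar j / Real.sqrt s)) =
        ((2 : ℝ) ^ (-((j.1 : ℝ) + 1) / 2) * ∑ i : Fin N, A i j) *
          (Abar j * ((Real.sqrt N)⁻¹ * (Real.sqrt s)⁻¹ * L⁻¹)) := by
      simp only [Finset.mul_sum, Finset.sum_mul]
      exact Finset.sum_congr rfl fun i _ => by ring
    rw [this, ← hAbar j]
    ring
  rw [key]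
  have : Real.sqrt N ≠ 0 := by
    have : (0:ℝ) < N := by exact_mod_cast Nat.lt_of_lt_of_le Nat.zero_lt_one hN
    positivity
  field_simp
  linear_combination (-L⁻¹) * hss + (-L⁻¹) * hs
end
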